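/- arXiv:1403.5428 — 3 statements merged into one kernel-verified Lean document; each statement's English description precedes it below -/
import Mathlib

section
/- (Theorem 3.2) Let S = {x_1, ..., x_n} be a meet closed set of n distinct elements of P and let f be semimultiplicative with f(x) ≠ 0 for all x ∈ P. Then the join matrix [S]_f is invertible if and only if for every k = 1, ..., n one has Σ_{z ∈ S, z ≤ x_k} (1/f(z)) · μ_S(z, x_k) ≠ 0. -/
/-!
Let `ζ` and `μ` be the zeta and Möbius matrices of a finite meet-semilattice `T`; they are mutually
inverse because `ζ * μ = μ * ζ = 1` in the incidence algebra. For `g : T → 𝕜` put `ψ = g ᵥ* μ`, so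
that `ψ ᵥ* ζ = g`, i.e. `∑_{c ≤ w} ψ c = g w`. Since `c ≤ a ⊓ b ↔ c ≤ a ∧ c ≤ b`, this says that the
meet matrix `(g (a ⊓ b))` equals `ζᵀ * diagonal ψ * ζ`, so it is invertible iff no `ψ c` vanishes.
Semimultiplicativity gives `f (a ⊔ b) = f a * f (a ⊓ b)⁻¹ * f b`, so the join matrix of a
meet-closed set `S` is the meet matrix of `1 / f` on `S` multiplied on both sides by `diagonal f`.
-/

open scoped Classical

/-- The Möbius function of the finite subposet determined by a finite subset `S` of `P`
(the inverse of the zeta function in the incidence algebra of `S`), extended by `0`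
outside `S × S`. -/
noncomputable def mobiusS {P : Type*} [Lattice P] (S : Finset P) (a b : P) : ℂ :=
  letI : LocallyFiniteOrder ↥S := Fintype.toLocallyFiniteOrder
  if ha : a ∈ S then
    if hb : b ∈ S then IncidenceAlgebra.mu ℂ (⟨a, ha⟩ : ↥S) (⟨b, hb⟩ : ↥S) else 0
  else 0

open Finset Matrix

namespace IncidenceAlgebra

variable {𝕜 α : Type*}

def toMatrix [Zero 𝕜] [LE α] (F : IncidenceAlgebra 𝕜 α) : Matrix α α 𝕜 :=
  Matrix.of fun a b => F a b

@[simp]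
lemma toMatrix_apply [Zero 𝕜] [LE α] (F : IncidenceAlgebra 𝕜 α) (a b : α) :
    F.toMatrix a b = F a b :=
  rfl

variable [Fintype α]

lemma toMatrix_mul [Preorder α] [LocallyFiniteOrder α] [NonUnitalNonAssocSemiring 𝕜]
    (F G : IncidenceAlgebra 𝕜 α) : (F * G).toMatrix = F.toMatrix * G.toMatrix := by
  ext a b
  rw [toMatrix_apply, mul_apply, Matrix.mul_apply]
  refine sum_subset (subset_univ _) fun c _ hc => ?_
  rcases not_and_or.1 (mt mem_Icc.2 hc) with hac | hcb
  · rw [apply_eq_zero_of_not_le hac, zero_mul]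
  · rw [apply_eq_zero_of_not_le hcb, mul_zero]

omit [Fintype α] in
lemma toMatrix_one [Preorder α] [DecidableEq α] [Semiring 𝕜] :
    (1 : IncidenceAlgebra 𝕜 α).toMatrix = 1 := by
  ext a b
  rw [toMatrix_apply, one_apply, Matrix.one_apply]

variable [PartialOrder α] [LocallyFiniteOrder α] [DecidableEq α] [Ring 𝕜]

lemma toMatrix_zeta_mul_toMatrix_mu :
    (zeta 𝕜 : IncidenceAlgebra 𝕜 α).toMatrix * (mu 𝕜).toMatrix = 1 := by
  rw [← toMatrix_mul, zeta_mul_mu, toMatrix_one]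

lemma toMatrix_mu_mul_toMatrix_zeta :
    (mu 𝕜 : IncidenceAlgebra 𝕜 α).toMatrix * (zeta 𝕜).toMatrix = 1 := by
  rw [← toMatrix_mul, mu_mul_zeta, toMatrix_one]

lemma isUnit_toMatrix_zeta : IsUnit (zeta 𝕜 : IncidenceAlgebra 𝕜 α).toMatrix :=
  ⟨⟨_, _, toMatrix_zeta_mul_toMatrix_mu, toMatrix_mu_mul_toMatrix_zeta⟩, rfl⟩

lemma vecMul_toMatrix_mu_vecMul_toMatrix_zeta (g : α → 𝕜) :
    g ᵥ* (mu 𝕜).toMatrix ᵥ* (zeta 𝕜).toMatrix = g := by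
  rw [vecMul_vecMul, toMatrix_mu_mul_toMatrix_zeta, vecMul_one]

end IncidenceAlgebra

open IncidenceAlgebra

section MeetMatrix

variable {𝕜 T : Type*} [CommRing 𝕜] [SemilatticeInf T] [Fintype T] [DecidableEq T]
  [LocallyFiniteOrder T]

theorem meetMatrix_eq_transpose_mul_diagonal_mul (g : T → 𝕜) :
    Matrix.of (fun a b => g (a ⊓ b)) =
      (zeta 𝕜).toMatrixᵀ * diagonal (g ᵥ* (mu 𝕜).toMatrix) * (zeta 𝕜).toMatrix := by
  ext a b
  have hinv := congrFun (vecMul_toMatrix_mu_vecMul_toMatrix_zeta (𝕜 := 𝕜) g) (a ⊓ b)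
  rw [of_apply, ← hinv, vecMul, dotProduct, Matrix.mul_apply]
  refine sum_congr rfl fun c _ => ?_
  simp only [mul_diagonal, transpose_apply, toMatrix_apply, zeta_apply, le_inf_iff]
  split_ifs <;> simp_all

theorem isUnit_meetMatrix_iff (g : T → 𝕜) :
    IsUnit (Matrix.of fun a b => g (a ⊓ b)) ↔ ∀ t, IsUnit ((g ᵥ* (mu 𝕜).toMatrix) t) := by
  have hZ : IsUnit (zeta 𝕜 : IncidenceAlgebra 𝕜 T).toMatrix := isUnit_toMatrix_zeta
  rw [meetMatrix_eq_transpose_mul_diagonal_mul, IsUnit.mul_right_iff hZ,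
    IsUnit.mul_left_iff ((isUnit_transpose _).2 hZ), isUnit_diagonal, Pi.isUnit_iff]

end MeetMatrix

section JoinMatrix

variable {𝕜 T P : Type*} [Field 𝕜] [SemilatticeInf T] [Fintype T] [DecidableEq T] [Lattice P]
  (v : InfHom T P) (f : P → 𝕜)

theorem joinMatrix_eq_diagonal_mul_meetMatrix_mul_diagonal
    (hsemi : ∀ p q : P, f p * f q = f (p ⊓ q) * f (p ⊔ q)) (hne : ∀ a, f (v a) ≠ 0) :
    Matrix.of (fun a b => f (v a ⊔ v b)) =
      diagonal (f ∘ v) * Matrix.of (fun a b => (f (v (a ⊓ b)))⁻¹) * diagonal (f ∘ v) := by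
  ext a b
  rw [mul_diagonal, diagonal_mul, of_apply, of_apply, Function.comp_apply, Function.comp_apply,
    map_inf]
  have hinf : f (v a ⊓ v b) ≠ 0 := v.map_inf' a b ▸ hne (a ⊓ b)
  field_simp
  linear_combination -hsemi (v a) (v b)

theorem isUnit_joinMatrix_iff [LocallyFiniteOrder T]
    (hsemi : ∀ p q : P, f p * f q = f (p ⊓ q) * f (p ⊔ q)) (hne : ∀ a, f (v a) ≠ 0) :
    IsUnit (Matrix.of fun a b => f (v a ⊔ v b)) ↔
      ∀ t, ((fun a => (f (v a))⁻¹) ᵥ* (mu 𝕜).toMatrix) t ≠ 0 := by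
  have hD : IsUnit (diagonal (f ∘ v)) :=
    isUnit_diagonal.2 (Pi.isUnit_iff.2 fun a => (hne a).isUnit)
  rw [joinMatrix_eq_diagonal_mul_meetMatrix_mul_diagonal v f hsemi hne, IsUnit.mul_right_iff hD,
    IsUnit.mul_left_iff hD, isUnit_meetMatrix_iff (fun a => (f (v a))⁻¹)]
  simp only [isUnit_iff_ne_zero]

end JoinMatrix

section MobiusS

variable {P : Type*} [Lattice P] {S : Finset P} [LocallyFiniteOrder S]

theorem mobiusS_coe (a b : S) : mobiusS S a b = mu ℂ a b := by
  rw [mobiusS, dif_pos a.2, dif_pos b.2]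
  congr!
  exact Subsingleton.elim _ _

theorem sum_filter_mul_mobiusS_eq_vecMul {ι : Type*} [Fintype ι] (e : ι ≃ S) (g : P → ℂ)
    (k : ι) :
    ∑ i ∈ univ.filter (fun i => (e i : P) ≤ e k), g (e i) * mobiusS S (e i) (e k) =
      ((fun a : S => g a) ᵥ* (mu ℂ).toMatrix) (e k) := by
  rw [vecMul, dotProduct, ← e.sum_comp, sum_filter]
  refine sum_congr rfl fun i _ => ?_
  rw [mobiusS_coe, toMatrix_apply]
  split_ifs with h
  · rfl
  · rw [apply_eq_zero_of_not_le (show ¬e i ≤ e k from h), mul_zero]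

end MobiusS

theorem joinMatrix_isUnit_iff_sums_ne_zero_general
    {P : Type*} [Lattice P]
    (f : P → ℂ) (hsemi : ∀ a b : P, f a * f b = f (a ⊓ b) * f (a ⊔ b))
    (hne : ∀ a : P, f a ≠ 0)
    {n : ℕ} (x : Fin n → P) (hinj : Function.Injective x)
    (hmeet : ∀ i j : Fin n, ∃ k : Fin n, x k = x i ⊓ x j) :
    IsUnit (Matrix.of fun i j : Fin n => f (x i ⊔ x j)) ↔
      ∀ k : Fin n,
        ∑ i ∈ Finset.univ.filter (fun i : Fin n => x i ≤ x k),
          (1 / f (x i)) * mobiusS (Finset.image x Finset.univ) (x i) (x k) ≠ 0 := by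
  set S := Finset.image x Finset.univ
  have hS : ∀ ⦃a b : P⦄, a ∈ S → b ∈ S → a ⊓ b ∈ S := by
    simp only [S, mem_image, mem_univ, true_and]
    rintro _ _ ⟨i, rfl⟩ ⟨j, rfl⟩
    exact hmeet i j
  let : SemilatticeInf S := Subtype.semilatticeInf hS
  let : LocallyFiniteOrder S := Fintype.toLocallyFiniteOrder
  let v : InfHom S P := ⟨Subtype.val, fun _ _ => rfl⟩
  let e : Fin n ≃ S :=
    (Equiv.ofInjective x hinj).trans (Equiv.subtypeEquivRight fun a => by simp [S])
  have hmat : (Matrix.of fun i j => f (x i ⊔ x j)) =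
      (Matrix.of fun a b => f (v a ⊔ v b)).submatrix e e := rfl
  rw [hmat, isUnit_submatrix_equiv, isUnit_joinMatrix_iff v f hsemi fun a => hne (v a)]
  refine (e.forall_congr fun k => ?_).symm
  simp only [one_div]
  exact Iff.of_eq (congrArg (· ≠ 0) (sum_filter_mul_mobiusS_eq_vecMul e (fun p => (f p)⁻¹) k))

/-- Theorem 3.2: Let `S = {x_1, …, x_n}` be a meet closed set of `n` distinct
elements of a lattice `P` with finite principal order ideals, indexed so that `x_i < x_j → i < j`,
and let `f` be semimultiplicative with nonzero values. Then the join matrix `[S]_f` is invertible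
iff for every `k` one has `Σ_{z ∈ S, z ≤ x_k} (1/f(z)) · μ_S(z, x_k) ≠ 0`. -/
theorem joinMatrix_isUnit_iff_sums_ne_zero
    {P : Type*} [Lattice P] (hfin : ∀ q : P, {y : P | y ≤ q}.Finite)
    (f : P → ℂ) (hsemi : ∀ a b : P, f a * f b = f (a ⊓ b) * f (a ⊔ b))
    (hne : ∀ a : P, f a ≠ 0)
    {n : ℕ} (x : Fin n → P) (hinj : Function.Injective x)
    (hidx : ∀ i j : Fin n, x i < x j → i < j)
    (hmeet : ∀ i j : Fin n, ∃ k : Fin n, x k = x i ⊓ x j) :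
    IsUnit (Matrix.of fun i j : Fin n => f (x i ⊔ x j)) ↔
      ∀ k : Fin n,
        ∑ i ∈ Finset.univ.filter (fun i : Fin n => x i ≤ x k),
          (1 / f (x i)) * mobiusS (Finset.image x Finset.univ) (x i) (x k) ≠ 0 :=
  joinMatrix_isUnit_iff_sums_ne_zero_general f hsemi hne x hinj hmeet
end

section
/- (Corollary 4.4, second part) If S is a gcd-closed set of distinct positive integers with exactly 6 elements, then the LCM matrix [S] is invertible. -/
/-!
For gcd-closed `S`, `[S] = Δ E diag(β) Eᵀ Δ`, where `Δ = diag(x)`, `E` is the divisibility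
incidence matrix of `S` (unitriangular) and `β` is the Möbius inversion of `x ↦ 1/x` over
`(S, ∣)`. So `[S]` is invertible as soon as no `β x` vanishes.

Now `β x = 1/x - ∑_{y ∈ P} β y`, where `P` is the set of proper divisors of `x` in `S`, and `P`
is the union of the down-sets of its maximal elements `M`. Two down-sets meet in the down-set
of the gcd, on which `β` sums to `1/gcd`. If `M = {m}` then `β x = 1/x - 1/m < 0`. If
`#M ≥ 2`, then since `#P ≤ 5` the gcds of pairs from `M` take few values, and inclusion-exclusion
together with `1/a + 1/b < 1/gcd a b` (for `a`, `b` not dividing each other) makes the sum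
over `P` negative, so `β x > 0`.
-/

open Finset
open scoped Matrix

noncomputable def beta (S : Finset ℕ) (x : ℕ) : ℚ :=
  (x : ℚ)⁻¹ - ∑ y ∈ (S.filter fun y => y ∣ x ∧ y < x).attach, beta S y.1
termination_by x
decreasing_by exact (mem_filter.mp y.2).2.2

theorem beta_eq (S : Finset ℕ) (x : ℕ) :
    beta S x = (x : ℚ)⁻¹ - ∑ y ∈ S.filter (fun y => y ∣ x ∧ y < x), beta S y := by
  rw [beta, sum_attach]

theorem sum_beta_filter_dvd {S : Finset ℕ} {z : ℕ} (hz : 0 < z) (hzS : z ∈ S) :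
    ∑ y ∈ S.filter (· ∣ z), beta S y = (z : ℚ)⁻¹ := by
  have hsplit : S.filter (· ∣ z) = insert z (S.filter fun y => y ∣ z ∧ y < z) := by
    ext y
    simp only [mem_filter, mem_insert]
    constructor
    · rintro ⟨hyS, hyz⟩
      exact (Nat.le_of_dvd hz hyz).eq_or_lt.imp id fun h => ⟨hyS, hyz, h⟩
    · rintro (rfl | ⟨hyS, hyz, -⟩)
      exacts [⟨hzS, dvd_rfl⟩, ⟨hyS, hyz⟩]
  rw [hsplit, sum_insert (by simp), beta_eq]
  ring

theorem filter_dvd_inter_filter_dvd (S : Finset ℕ) (a b : ℕ) :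
    S.filter (· ∣ a) ∩ S.filter (· ∣ b) = S.filter (· ∣ Nat.gcd a b) := by
  simp only [Nat.dvd_gcd_iff, filter_and]

section LcmMatrix

variable (S : Finset ℕ)

def dvdMatrix : Matrix S S ℚ :=
  Matrix.of fun i j => if (j : ℕ) ∣ i then 1 else 0

theorem dvdMatrix_mul_diagonal_mul_transpose_apply (f : ℕ → ℚ) (i j : S) :
    (dvdMatrix S * Matrix.diagonal (fun k : S => f k) * (dvdMatrix S)ᵀ) i j
      = ∑ k ∈ S.filter (· ∣ Nat.gcd i j), f k := by
  rw [sum_filter, ← sum_coe_sort S]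
  refine sum_congr rfl fun k _ => ?_
  simp only [dvdMatrix, Matrix.mul_diagonal, Matrix.transpose_apply, Matrix.of_apply,
    Nat.dvd_gcd_iff]
  split_ifs <;> simp_all

theorem isUnit_dvdMatrix (hpos : ∀ a ∈ S, 0 < a) : IsUnit (dvdMatrix S) := by
  have hlower : (dvdMatrix S).IsLowerTriangular := fun i j hij => by
    have : ¬ (j : ℕ) ∣ i := fun h => (Nat.le_of_dvd (hpos i i.2) h).not_gt hij
    simp [dvdMatrix, this]
  rw [Matrix.isUnit_iff_isUnit_det, Matrix.det_of_isLowerTriangular _ hlower]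
  simp [dvdMatrix]

theorem lcmMatrix_eq (hpos : ∀ a ∈ S, 0 < a) (hgcd : ∀ a ∈ S, ∀ b ∈ S, Nat.gcd a b ∈ S) :
    Matrix.of (fun i j : S => (Nat.lcm i j : ℚ)) =
      Matrix.diagonal (fun i : S => (i : ℚ)) *
        (dvdMatrix S * Matrix.diagonal (fun k : S => beta S k) * (dvdMatrix S)ᵀ) *
        Matrix.diagonal (fun i : S => (i : ℚ)) := by
  ext i j
  have hg : 0 < Nat.gcd i j := Nat.gcd_pos_of_pos_left _ (hpos i i.2)
  rw [Matrix.mul_diagonal, Matrix.diagonal_mul, dvdMatrix_mul_diagonal_mul_transpose_apply,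
    sum_beta_filter_dvd hg (hgcd _ i.2 _ j.2), Matrix.of_apply]
  have := congrArg (Nat.cast : ℕ → ℚ) (Nat.gcd_mul_lcm (i : ℕ) j)
  push_cast at this
  field_simp
  linarith

theorem isUnit_lcmMatrix_of_beta_ne_zero (hpos : ∀ a ∈ S, 0 < a)
    (hgcd : ∀ a ∈ S, ∀ b ∈ S, Nat.gcd a b ∈ S) (hbeta : ∀ x ∈ S, beta S x ≠ 0) :
    IsUnit (Matrix.of fun i j : S => (Nat.lcm i j : ℚ)) := by
  have hdiag : IsUnit (Matrix.diagonal fun i : S => (i : ℚ)) :=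
    Matrix.isUnit_diagonal.mpr <| Pi.isUnit_iff.mpr fun i =>
      isUnit_iff_ne_zero.mpr (Nat.cast_ne_zero.mpr (hpos i i.2).ne')
  have hbeta' : IsUnit (Matrix.diagonal fun k : S => beta S k) :=
    Matrix.isUnit_diagonal.mpr <| Pi.isUnit_iff.mpr fun k => isUnit_iff_ne_zero.mpr (hbeta k k.2)
  have hE := isUnit_dvdMatrix S hpos
  rw [lcmMatrix_eq S hpos hgcd]
  exact (hdiag.mul ((hE.mul hbeta').mul ((Matrix.isUnit_transpose _).mpr hE))).mul hdiag

end LcmMatrix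

theorem inv_add_inv_lt_one {k l : ℕ} (hk : 2 ≤ k) (hl : 2 ≤ l) (hkl : k ≠ l) :
    (k : ℚ)⁻¹ + (l : ℚ)⁻¹ < 1 := by
  wlog hlt : k < l generalizing k l
  · rw [add_comm]
    exact this hl hk hkl.symm (by omega)
  have hk' : (k : ℚ)⁻¹ ≤ 2⁻¹ := inv_anti₀ (by norm_num) (by exact_mod_cast hk)
  have hl' : (l : ℚ)⁻¹ ≤ 3⁻¹ := inv_anti₀ (by norm_num) (by exact_mod_cast hlt.trans_le' hk)
  linarith

theorem inv_add_inv_lt_inv_gcd {a b : ℕ} (hab : ¬ a ∣ b) (hba : ¬ b ∣ a) :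
    (a : ℚ)⁻¹ + (b : ℚ)⁻¹ < (Nat.gcd a b : ℚ)⁻¹ := by
  obtain ⟨k, hk⟩ := Nat.gcd_dvd_left a b
  obtain ⟨l, hl⟩ := Nat.gcd_dvd_right a b
  generalize Nat.gcd a b = g at hk hl ⊢
  subst hk hl
  have hg : g ≠ 0 := by rintro rfl; simp at hab
  have hk : 2 ≤ k := by
    by_contra! h
    interval_cases k <;> simp_all
  have hl : 2 ≤ l := by
    by_contra! h
    interval_cases l <;> simp_all
  have hkl : k ≠ l := by rintro rfl; exact hab dvd_rfl
  calc ((g * k : ℕ) : ℚ)⁻¹ + ((g * l : ℕ) : ℚ)⁻¹ = ((k : ℚ)⁻¹ + (l : ℚ)⁻¹) * (g : ℚ)⁻¹ := by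
        push_cast
        ring
    _ < 1 * (g : ℚ)⁻¹ := by gcongr; exact inv_add_inv_lt_one hk hl hkl
    _ = (g : ℚ)⁻¹ := one_mul _

def pairwiseGcds (M : Finset ℕ) : Finset ℕ :=
  M.offDiag.image fun q => Nat.gcd q.1 q.2

theorem gcd_mem_pairwiseGcds {M : Finset ℕ} {a b : ℕ} (ha : a ∈ M) (hb : b ∈ M) (hab : a ≠ b) :
    Nat.gcd a b ∈ pairwiseGcds M :=
  mem_image.mpr ⟨(a, b), mem_offDiag.mpr ⟨ha, hb, hab⟩, rfl⟩

theorem gcd_eq_gcd_of_card_pairwiseGcds_le_two {a b c : ℕ} (hab : a ≠ b) (hac : a ≠ c)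
    (hbc : b ≠ c) (hcard : #(pairwiseGcds {a, b, c}) ≤ 2) :
    Nat.gcd a b = Nat.gcd a c ∨ Nat.gcd b a = Nat.gcd b c ∨ Nat.gcd c a = Nat.gcd c b := by
  by_contra! hne
  rw [Nat.gcd_comm b a, Nat.gcd_comm c a, Nat.gcd_comm c b] at hne
  have hsub : {Nat.gcd a b, Nat.gcd a c, Nat.gcd b c} ⊆ pairwiseGcds {a, b, c} := by
    simp only [insert_subset_iff, singleton_subset_iff]
    exact ⟨gcd_mem_pairwiseGcds (by simp) (by simp) hab,
      gcd_mem_pairwiseGcds (by simp) (by simp) hac, gcd_mem_pairwiseGcds (by simp) (by simp) hbc⟩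
  have := card_le_card hsub
  rw [card_eq_three.mpr ⟨_, _, _, hne.1, hne.2.1, hne.2.2, rfl⟩] at this
  omega

section SumBeta

variable {S : Finset ℕ}

theorem sum_beta_union_filter_dvd_lt_zero {a b : ℕ} (ha : a ∈ S) (hb : b ∈ S)
    (hgcd : Nat.gcd a b ∈ S) (hab : ¬ a ∣ b) (hba : ¬ b ∣ a) :
    ∑ y ∈ S.filter (· ∣ a) ∪ S.filter (· ∣ b), beta S y < 0 := by
  have ha0 : 0 < a := Nat.pos_of_ne_zero (by rintro rfl; exact hba (dvd_zero b))
  have hb0 : 0 < b := Nat.pos_of_ne_zero (by rintro rfl; exact hab (dvd_zero a))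
  have hsum := sum_union_inter (s₁ := S.filter (· ∣ a)) (s₂ := S.filter (· ∣ b)) (f := beta S)
  rw [filter_dvd_inter_filter_dvd, sum_beta_filter_dvd ha0 ha, sum_beta_filter_dvd hb0 hb,
    sum_beta_filter_dvd (Nat.gcd_pos_of_pos_left b ha0) hgcd] at hsum
  linarith [inv_add_inv_lt_inv_gcd hab hba]

theorem sum_beta_biUnion_insert_lt {M : Finset ℕ} {p w : ℕ} (hp : p ∈ S) (hp0 : 0 < p)
    (hw : w ∈ S) (hwp : w ∣ p) (hwp' : w ≠ p) (hM : M.Nonempty)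
    (hgcd : ∀ q ∈ M, Nat.gcd p q = w) :
    ∑ y ∈ (insert p M).biUnion (fun m => S.filter (· ∣ m)), beta S y <
      ∑ y ∈ M.biUnion (fun m => S.filter (· ∣ m)), beta S y := by
  have hinter : S.filter (· ∣ p) ∩ M.biUnion (fun m => S.filter (· ∣ m)) = S.filter (· ∣ w) := by
    rw [inter_biUnion]
    ext y
    simp only [filter_dvd_inter_filter_dvd, mem_biUnion]
    constructor
    · rintro ⟨q, hq, hy⟩
      rwa [hgcd q hq] at hy
    · obtain ⟨q, hq⟩ := hM
      exact fun hy => ⟨q, hq, by rwa [hgcd q hq]⟩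
  have hsum := sum_union_inter (s₁ := S.filter (· ∣ p))
    (s₂ := M.biUnion (fun m => S.filter (· ∣ m))) (f := beta S)
  have hw0 : 0 < w := Nat.pos_of_dvd_of_pos hwp hp0
  have hlt : (p : ℚ)⁻¹ < (w : ℚ)⁻¹ :=
    inv_strictAnti₀ (by exact_mod_cast hw0)
      (by exact_mod_cast (Nat.le_of_dvd hp0 hwp).lt_of_ne hwp')
  rw [hinter, sum_beta_filter_dvd hp0 hp, sum_beta_filter_dvd hw0 hw] at hsum
  rw [biUnion_insert]
  linarith

theorem sum_beta_biUnion_lt_zero_of_gcd_eq {M : Finset ℕ} {w : ℕ} (hpos : ∀ a ∈ S, 0 < a)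
    (hMS : M ⊆ S) (hanti : IsAntichain (· ∣ ·) (M : Set ℕ)) (hM : 2 ≤ #M) (hw : w ∈ S)
    (hgcd : ∀ a ∈ M, ∀ b ∈ M, a ≠ b → Nat.gcd a b = w) :
    ∑ y ∈ M.biUnion (fun m => S.filter (· ∣ m)), beta S y < 0 := by
  induction M using Finset.induction_on with
  | empty => simp at hM
  | insert p M hpM ih =>
    have hp : p ∈ S := hMS (mem_insert_self p M)
    have hgcd' : ∀ q ∈ M, Nat.gcd p q = w := fun q hq =>
      hgcd p (mem_insert_self p M) q (mem_insert_of_mem hq) (ne_of_mem_of_not_mem hq hpM).symm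
    have hndvd : ∀ q ∈ M, ¬ p ∣ q := fun q hq =>
      hanti (mem_insert_self p M) (mem_insert_of_mem hq) (ne_of_mem_of_not_mem hq hpM).symm
    rw [card_insert_of_notMem hpM] at hM
    obtain ⟨q, hq⟩ : M.Nonempty := card_pos.mp (by omega)
    have hwp : w ∣ p := hgcd' q hq ▸ Nat.gcd_dvd_left p q
    have hwp' : w ≠ p := fun h => hndvd q hq (h ▸ hgcd' q hq ▸ Nat.gcd_dvd_right p q)
    rcases (show #M = 1 ∨ 2 ≤ #M by omega) with h1 | h2
    · obtain ⟨r, rfl⟩ := card_eq_one.mp h1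
      rw [biUnion_insert, singleton_biUnion]
      have hr := mem_singleton_self r
      exact sum_beta_union_filter_dvd_lt_zero hp (hMS (by simp)) (hgcd' r hr ▸ hw) (hndvd r hr)
        (hanti (by simp) (by simp) (ne_of_mem_of_not_mem hr hpM))
    · refine (sum_beta_biUnion_insert_lt hp (hpos p hp) hw hwp hwp' ⟨q, hq⟩ hgcd').trans ?_
      exact ih (fun y hy => hMS (mem_insert_of_mem hy)) (hanti.subset (by simp))
        h2 (fun a ha b hb => hgcd a (mem_insert_of_mem ha) b (mem_insert_of_mem hb))

theorem sum_beta_biUnion_triple_lt_zero {p q r : ℕ} (hpos : ∀ a ∈ S, 0 < a)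
    (hgcd : ∀ a ∈ S, ∀ b ∈ S, Nat.gcd a b ∈ S) (hp : p ∈ S) (hq : q ∈ S) (hr : r ∈ S)
    (hpq : ¬ p ∣ q) (hqr : ¬ q ∣ r) (hrq : ¬ r ∣ q) (hpqr : Nat.gcd p q = Nat.gcd p r) :
    ∑ y ∈ ({p, q, r} : Finset ℕ).biUnion (fun m => S.filter (· ∣ m)), beta S y < 0 := by
  have hwp : Nat.gcd p q ≠ p := fun h => hpq (h ▸ Nat.gcd_dvd_right p q)
  refine (sum_beta_biUnion_insert_lt hp (hpos p hp) (hgcd p hp q hq) (Nat.gcd_dvd_left p q) hwp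
    (insert_nonempty q {r}) (by simp [hpqr])).trans ?_
  rw [biUnion_insert, singleton_biUnion]
  exact sum_beta_union_filter_dvd_lt_zero hq hr (hgcd q hq r hr) hqr hrq

theorem sum_beta_biUnion_lt_zero {M : Finset ℕ} (hpos : ∀ a ∈ S, 0 < a)
    (hgcd : ∀ a ∈ S, ∀ b ∈ S, Nat.gcd a b ∈ S) (hMS : M ⊆ S)
    (hanti : IsAntichain (· ∣ ·) (M : Set ℕ)) (hM : 2 ≤ #M) (hcard : #M + #(pairwiseGcds M) ≤ 5) :
    ∑ y ∈ M.biUnion (fun m => S.filter (· ∣ m)), beta S y < 0 := by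
  obtain ⟨a, ha, b, hb, hab⟩ := one_lt_card.mp hM
  have hG : 0 < #(pairwiseGcds M) := card_pos.mpr ⟨_, gcd_mem_pairwiseGcds ha hb hab⟩
  rcases (show #M = 2 ∨ #M = 3 ∨ #M = 4 by omega) with h2 | h3 | h4
  · obtain ⟨a, b, hab, rfl⟩ := card_eq_two.mp h2
    rw [biUnion_insert, singleton_biUnion]
    exact sum_beta_union_filter_dvd_lt_zero (hMS (by simp)) (hMS (by simp))
      (hgcd a (hMS (by simp)) b (hMS (by simp))) (hanti (by simp) (by simp) hab)
      (hanti (by simp) (by simp) hab.symm)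
  · obtain ⟨a, b, c, hab, hac, hbc, rfl⟩ := card_eq_three.mp h3
    have hS : a ∈ S ∧ b ∈ S ∧ c ∈ S := by simpa [insert_subset_iff] using hMS
    have hndvd : ∀ x ∈ ({a, b, c} : Finset ℕ), ∀ y ∈ ({a, b, c} : Finset ℕ), x ≠ y → ¬ x ∣ y :=
      fun x hx y hy => hanti (mem_coe.mpr hx) (mem_coe.mpr hy)
    have hshared := gcd_eq_gcd_of_card_pairwiseGcds_le_two hab hac hbc (by omega)
    rcases hshared with h | h | h
    · exact sum_beta_biUnion_triple_lt_zero hpos hgcd hS.1 hS.2.1 hS.2.2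
        (hndvd _ (by simp) _ (by simp) hab) (hndvd _ (by simp) _ (by simp) hbc)
        (hndvd _ (by simp) _ (by simp) hbc.symm) h
    · rw [insert_comm]
      exact sum_beta_biUnion_triple_lt_zero hpos hgcd hS.2.1 hS.1 hS.2.2
        (hndvd _ (by simp) _ (by simp) hab.symm) (hndvd _ (by simp) _ (by simp) hac)
        (hndvd _ (by simp) _ (by simp) hac.symm) h
    · rw [show ({a, b, c} : Finset ℕ) = {c, a, b} by ext; simp; tauto]
      exact sum_beta_biUnion_triple_lt_zero hpos hgcd hS.2.2 hS.1 hS.2.1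
        (hndvd _ (by simp) _ (by simp) hac.symm) (hndvd _ (by simp) _ (by simp) hab)
        (hndvd _ (by simp) _ (by simp) hab.symm) h
  · exact sum_beta_biUnion_lt_zero_of_gcd_eq hpos hMS hanti hM (hgcd a (hMS ha) b (hMS hb))
      fun c hc d hd hcd => card_le_one.mp (by omega) _ (gcd_mem_pairwiseGcds hc hd hcd) _
        (gcd_mem_pairwiseGcds ha hb hab)

end SumBeta

def dvdMaximals (P : Finset ℕ) : Finset ℕ :=
  P.filter fun y => ∀ z ∈ P, y ∣ z → y = z

theorem isAntichain_dvdMaximals (P : Finset ℕ) :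
    IsAntichain (· ∣ ·) (dvdMaximals P : Set ℕ) :=
  fun _ ha b hb hab hdvd => hab ((mem_filter.mp ha).2 b (mem_filter.mp hb).1 hdvd)

theorem exists_mem_dvdMaximals_dvd {P : Finset ℕ} (hpos : ∀ z ∈ P, 0 < z) {y : ℕ} (hy : y ∈ P) :
    ∃ m ∈ dvdMaximals P, y ∣ m := by
  set Q := P.filter (y ∣ ·)
  have hQ : Q.Nonempty := ⟨y, mem_filter.mpr ⟨hy, dvd_rfl⟩⟩
  obtain ⟨hmP, hym⟩ := mem_filter.mp (Q.max'_mem hQ)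
  refine ⟨Q.max' hQ, mem_filter.mpr ⟨hmP, fun z hz hmz => ?_⟩, hym⟩
  exact (Nat.le_of_dvd (hpos z hz) hmz).antisymm
    (Q.le_max' z (mem_filter.mpr ⟨hz, hym.trans hmz⟩))

theorem biUnion_dvdMaximals_filter_dvd {S P : Finset ℕ} (hPS : P ⊆ S) (hpos : ∀ z ∈ P, 0 < z)
    (hdown : ∀ m ∈ P, S.filter (· ∣ m) ⊆ P) :
    (dvdMaximals P).biUnion (fun m => S.filter (· ∣ m)) = P := by
  ext y
  simp only [mem_biUnion]
  constructor
  · rintro ⟨m, hm, hy⟩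
    exact hdown m (mem_filter.mp hm).1 hy
  · intro hy
    obtain ⟨m, hm, hym⟩ := exists_mem_dvdMaximals_dvd hpos hy
    exact ⟨m, hm, mem_filter.mpr ⟨hPS hy, hym⟩⟩

theorem card_dvdMaximals_add_card_pairwiseGcds_le {P : Finset ℕ}
    (hP : ∀ a ∈ P, ∀ b ∈ P, Nat.gcd a b ∈ P) :
    #(dvdMaximals P) + #(pairwiseGcds (dvdMaximals P)) ≤ #P := by
  have hMP : dvdMaximals P ⊆ P := filter_subset _ _
  have hmax : ∀ m ∈ dvdMaximals P, ∀ z ∈ P, m ∣ z → m = z := fun m hm => (mem_filter.mp hm).2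
  rw [← card_union_of_disjoint]
  · refine card_le_card (union_subset hMP fun g hg => ?_)
    obtain ⟨⟨a, b⟩, hab, rfl⟩ := mem_image.mp hg
    obtain ⟨ha, hb, -⟩ := mem_offDiag.mp hab
    exact hP a (hMP ha) b (hMP hb)
  · refine disjoint_right.mpr fun g hg hgM => ?_
    obtain ⟨⟨a, b⟩, hab, rfl⟩ := mem_image.mp hg
    obtain ⟨ha, hb, hne⟩ := mem_offDiag.mp hab
    have hga : Nat.gcd a b = a := hmax _ hgM a (hMP ha) (Nat.gcd_dvd_left a b)
    exact hne (hmax a ha b (hMP hb) (hga ▸ Nat.gcd_dvd_right a b))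

theorem beta_ne_zero_of_card_le_six {S : Finset ℕ} (hpos : ∀ a ∈ S, 0 < a)
    (hgcd : ∀ a ∈ S, ∀ b ∈ S, Nat.gcd a b ∈ S) (hcard : #S ≤ 6) {x : ℕ} (hx : x ∈ S) :
    beta S x ≠ 0 := by
  set P := S.filter fun y => y ∣ x ∧ y < x
  have hPS : P ⊆ S := filter_subset _ _
  have hP : #P ≤ 5 := by
    have := card_le_card (show P ⊆ S.erase x from
      fun y hy => mem_erase.mpr ⟨(mem_filter.mp hy).2.2.ne, hPS hy⟩)
    rw [card_erase_of_mem hx] at this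
    omega
  have hdown : ∀ m ∈ P, S.filter (· ∣ m) ⊆ P := fun m hm y hy => by
    obtain ⟨hmS, hmx, hmlt⟩ := mem_filter.mp hm
    obtain ⟨hyS, hym⟩ := mem_filter.mp hy
    exact mem_filter.mpr ⟨hyS, hym.trans hmx, (Nat.le_of_dvd (hpos m hmS) hym).trans_lt hmlt⟩
  have hPgcd : ∀ a ∈ P, ∀ b ∈ P, Nat.gcd a b ∈ P := fun a ha b hb =>
    hdown a ha (mem_filter.mpr ⟨hgcd a (hPS ha) b (hPS hb), Nat.gcd_dvd_left a b⟩)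
  set M := dvdMaximals P
  have hMS : M ⊆ S := (filter_subset _ _).trans hPS
  have hbeta : beta S x = (x : ℚ)⁻¹ - ∑ y ∈ M.biUnion (fun m => S.filter (· ∣ m)), beta S y := by
    rw [biUnion_dvdMaximals_filter_dvd hPS (fun z hz => hpos z (hPS hz)) hdown, beta_eq]
  have hx0 : (0 : ℚ) < (x : ℚ)⁻¹ := by have := hpos x hx; positivity
  rcases (show #M = 0 ∨ #M = 1 ∨ 2 ≤ #M by omega) with h0 | h1 | h2
  · rw [hbeta, card_eq_zero.mp h0, biUnion_empty, sum_empty, sub_zero]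
    exact hx0.ne'
  · obtain ⟨m, hm⟩ := card_eq_one.mp h1
    obtain ⟨hmS, -, hmx⟩ := mem_filter.mp ((filter_subset _ _) (hm ▸ mem_singleton_self m))
    have hm0 := hpos m hmS
    have hlt : (x : ℚ)⁻¹ < (m : ℚ)⁻¹ := inv_strictAnti₀ (by positivity) (by exact_mod_cast hmx)
    rw [hbeta, hm, singleton_biUnion, sum_beta_filter_dvd hm0 hmS]
    exact (sub_neg.mpr hlt).ne
  · have := sum_beta_biUnion_lt_zero hpos hgcd hMS (isAntichain_dvdMaximals P) h2
      ((card_dvdMaximals_add_card_pairwiseGcds_le hPgcd).trans hP)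
    rw [hbeta]
    linarith

/-- If `S` is a gcd-closed set of distinct positive integers with exactly 6
elements, then the LCM matrix `[S]` is invertible. -/
theorem lcmMatrix_gcdClosed_card_eq_six_isUnit
    (S : Finset ℕ) (hpos : ∀ a ∈ S, 0 < a)
    (hgcd : ∀ a ∈ S, ∀ b ∈ S, Nat.gcd a b ∈ S)
    (hcard : S.card = 6) :
    IsUnit (Matrix.of fun i j : ↥S => (Nat.lcm (i : ℕ) (j : ℕ) : ℚ)) :=
  isUnit_lcmMatrix_of_beta_ne_zero S hpos hgcd fun _ hx =>
    beta_ne_zero_of_card_le_six hpos hgcd hcard.le hx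
end

section
/- (Haukkanen–Wang–Sillanpää counterexample to the Bourque–Ligh conjecture) The set S = {1, 2, 3, 4, 5, 6, 10, 45, 180} of 9 distinct positive integers is gcd-closed, yet the 9 × 9 LCM matrix [S] with (i,j) entry lcm(x_i, x_j) is singular, i.e., its determinant is 0. -/
/-! The LCM matrix of `S` has the integer kernel vector `(-180, 180, 60, -45, 36, -30, -18, -4, 1)`,
so it is singular over `ℤ`, hence over every commutative ring, the determinant commuting with ring
homomorphisms. Working over `ℤ` rather than `ℚ` makes the nine kernel equations decidable by
evaluation. -/

def hwsSet : Fin 9 → ℕ := ![1, 2, 3, 4, 5, 6, 10, 45, 180]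

open Matrix

def GcdClosed {ι : Type*} (x : ι → ℕ) : Prop :=
  ∀ i j, ∃ k, x k = Nat.gcd (x i) (x j)

def lcmMatrix {ι : Type*} (R : Type*) [NatCast R] (x : ι → ℕ) : Matrix ι ι R :=
  of fun i j => (Nat.lcm (x i) (x j) : R)

theorem lcmMatrix_map {ι R S : Type*} [NonAssocSemiring R] [NonAssocSemiring S] (f : R →+* S)
    (x : ι → ℕ) : (lcmMatrix R x).map f = lcmMatrix S x := by
  ext i j
  simp [lcmMatrix]

theorem det_lcmMatrix_eq_zero_of_mulVec_eq_zero {ι : Type*} [Fintype ι] [DecidableEq ι]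
    (R : Type*) [CommRing R] {x : ι → ℕ} {v : ι → ℤ} (hv : v ≠ 0) (hxv : lcmMatrix ℤ x *ᵥ v = 0) : (lcmMatrix R x).det = 0 := by
  have hdet : (lcmMatrix ℤ x).det = 0 := exists_mulVec_eq_zero_iff.mp ⟨v, hv, hxv⟩
  rw [← lcmMatrix_map (Int.castRingHom R), ← RingHom.mapMatrix_apply, ← RingHom.map_det, hdet,
    map_zero]

theorem gcdClosed_hwsSet : GcdClosed hwsSet := by
  unfold GcdClosed
  decide

def hwsKernelVector : Fin 9 → ℤ := ![-180, 180, 60, -45, 36, -30, -18, -4, 1]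

theorem hwsKernelVector_ne_zero : hwsKernelVector ≠ 0 := by
  decide

theorem lcmMatrix_hwsSet_mulVec_hwsKernelVector : lcmMatrix ℤ hwsSet *ᵥ hwsKernelVector = 0 := by
  ext i
  revert i
  decide

/-- Haukkanen–Wang–Sillanpää counterexample to the Bourque–Ligh conjecture:
the set `S = {1, 2, 3, 4, 5, 6, 10, 45, 180}` consists of 9 distinct positive integers, is
gcd-closed, yet the 9 × 9 LCM matrix `[S]` is singular (its determinant is `0`). -/
theorem hws_counterexample :
    Function.Injective hwsSet ∧ (∀ i, 0 < hwsSet i) ∧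
    (∀ i j : Fin 9, ∃ k : Fin 9, hwsSet k = Nat.gcd (hwsSet i) (hwsSet j)) ∧
    (Matrix.of fun i j : Fin 9 => (Nat.lcm (hwsSet i) (hwsSet j) : ℚ)).det = 0 :=
  ⟨by decide, by decide, gcdClosed_hwsSet,
    det_lcmMatrix_eq_zero_of_mulVec_eq_zero ℚ hwsKernelVector_ne_zero
      lcmMatrix_hwsSet_mulVec_hwsKernelVector⟩
end
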